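/- Fix integers r ≥ 1 and m* ≥ r. For each n, let p_n > m* be an integer and let Ŵ⁽ⁿ⁾ be a random p_n × p_n real symmetric positive semidefinite matrix whose entrywise expectation W⁽ⁿ⁾ = E[Ŵ⁽ⁿ⁾] is symmetric positive semidefinite of rank r. Write λ̂₁⁽ⁿ⁾ ≥ … ≥ λ̂_{p_n}⁽ⁿ⁾ for the eigenvalues of Ŵ⁽ⁿ⁾ and λ₁⁽ⁿ⁾ ≥ … ≥ λ_r⁽ⁿ⁾ > 0 = λ_{r+1}⁽ⁿ⁾ = … = λ_{p_n}⁽ⁿ⁾ for those of W⁽ⁿ⁾, and assume λ_r⁽ⁿ⁾ → ∞ as n → ∞. Let γ_n > 0 and β_n > 0 be deterministic sequences such that: (a) for every ε > 0 there exists M > 0 with limsup_n P(|λ̂₁⁽ⁿ⁾ − λ₁⁽ⁿ⁾| > ε·λ₁⁽ⁿ⁾ + M·γ_n) ≤ ε and limsup_n P(|λ̂_r⁽ⁿ⁾ − λ_r⁽ⁿ⁾| > ε·λ_r⁽ⁿ⁾ + M·γ_n) ≤ ε; (b) for every ε > 0 there exists M > 0 with limsup_n P(λ̂_{r+1}⁽ⁿ⁾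 > M·β_n) ≤ ε. Let h_n > 0 be a deterministic penalty sequence satisfying (h_n + β_n)·λ₁⁽ⁿ⁾/(λ_r⁽ⁿ⁾)² → 0, γ_n/λ_r⁽ⁿ⁾ → 0, and h_n·λ_r⁽ⁿ⁾/β_n² → ∞. Then P( m = r is the unique minimizer over m ∈ {1,…,m*} of the ratio (λ̂_{m+1}⁽ⁿ⁾ + h_n)/(λ̂_m⁽ⁿ⁾ + h_n) ) → 1 as n → ∞. -/

import Mathlib

open MeasureTheory Filter Asymptotics
open scoped Topology ENNReal

/-!
On the event where `λ̂₁ ≤ 3λ₁/2`, `λ̂_r ≥ λ_r/2` and `λ̂_{r+1} ≤ Kβ_n`, which by (a), (b) and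
`γ_n = o(λ_r)` has probability at least `1 - δ` for large `n`, the penalty conditions give
`ER(r) < (λ̂_r + h)/(λ̂₁ + h) ≤ ER(m)` for `m < r` and `ER(r) < h/(λ̂_{r+1} + h) ≤ ER(m)` for
`m > r`, by monotonicity of the sample eigenvalues.
-/

theorem div_lt_div_of_mul_lt_sq {x y t u v : ℝ} (hy : 0 < y) (hv : 0 < v) (hyu : y ≤ u)
    (hvt : v ≤ t) (hxt : x * t < y ^ 2) : x / y < u / v :=
  calc x / y < y / t := (div_lt_div_iff₀ hy (hv.trans_le hvt)).2 (by rwa [← sq])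
    _ ≤ u / v := div_le_div₀ (hy.le.trans hyu) hyu hv hvt

theorem div_lt_div_of_sq_lt_mul {x y u v h : ℝ} (hh : 0 < h) (hx : 0 < x) (hv : 0 < v)
    (hvx : v ≤ x) (hhu : h ≤ u) (hxy : x ^ 2 < h * y) : x / y < u / v :=
  have hy : 0 < y := pos_of_mul_pos_right (hxy.trans' (by positivity)) hh.le
  calc x / y < h / x := (div_lt_div_iff₀ hy hx).2 (by rwa [← sq])
    _ ≤ u / v := div_le_div₀ (hh.le.trans hhu) hhu hv hvx

theorem eigenRatio_lt_of_key {p r mstar : ℕ} {l : Fin p → ℝ} (hl : Antitone l)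
    (hl₀ : ∀ i, 0 ≤ l i) {h : ℝ} (hh : 0 < h) (hrm : r ≤ mstar) (hp : mstar < p)
    (hkey_lt : (l ⟨r, by omega⟩ + h) * (l ⟨0, by omega⟩ + h) < (l ⟨r - 1, by omega⟩ + h) ^ 2)
    (hkey_gt : (l ⟨r, by omega⟩ + h) ^ 2 < h * (l ⟨r - 1, by omega⟩ + h)) :
    ∀ m, 1 ≤ m → ∀ hm : m ≤ mstar, m ≠ r →
      (l ⟨r, by omega⟩ + h) / (l ⟨r - 1, by omega⟩ + h) <
        (l ⟨m, by omega⟩ + h) / (l ⟨m - 1, by omega⟩ + h) := by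
  intro m _ hm hmr
  have hpos : ∀ i, 0 < l i + h := fun i => by linarith [hl₀ i]
  rcases hmr.lt_or_gt with hlt | hgt
  · exact div_lt_div_of_mul_lt_sq (hpos _) (hpos _)
      (by gcongr; exact hl (Fin.mk_le_mk.2 (by omega)))
      (by gcongr; exact hl (Fin.mk_le_mk.2 (Nat.zero_le _))) hkey_lt
  · exact div_lt_div_of_sq_lt_mul hh (hpos _) (hpos _)
      (by gcongr; exact hl (Fin.mk_le_mk.2 (by omega))) (by linarith [hl₀ ⟨m, by omega⟩])
      hkey_gt

section KeyInequalities

variable {L₁ L_r l₁ l_r l_r' β h K : ℝ}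

theorem mul_lt_sq_of_close (hL_r : 0 < L_r) (hK : 0 ≤ K) (hβ : 0 ≤ β) (hh : 0 < h)
    (hl₁ : |l₁ - L₁| ≤ L₁ / 2) (hl_r : |l_r - L_r| ≤ L_r / 2) (hl_r' : l_r' ≤ K * β)
    (hpen : 8 * (K + 1) * (h + β) * L₁ < L_r ^ 2) (hh_r : 4 * h < L_r)
    (hL : L_r ≤ L₁) : (l_r' + h) * (l₁ + h) < (l_r + h) ^ 2 :=
  calc (l_r' + h) * (l₁ + h) ≤ ((K + 1) * (h + β)) * (2 * L₁) :=
        mul_le_mul (by nlinarith) (by linarith [(abs_le.1 hl₁).2])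
          (by linarith [(abs_le.1 hl₁).1]) (by positivity)
    _ < (L_r / 2) ^ 2 := by linarith
    _ ≤ (l_r + h) ^ 2 := by gcongr; linarith [(abs_le.1 hl_r).1]

theorem sq_lt_mul_of_close (hh : 0 < h) (hl_r : |l_r - L_r| ≤ L_r / 2) (hl_r' : l_r' ≤ K * β)
    (hl_r'₀ : 0 ≤ l_r') (hpen : 8 * K ^ 2 * β ^ 2 ≤ h * L_r) (hh_r : 4 * h < L_r) :
    (l_r' + h) ^ 2 < h * (l_r + h) :=
  calc (l_r' + h) ^ 2 ≤ (K * β + h) ^ 2 := by gcongr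
    _ ≤ 2 * (K * β) ^ 2 + 2 * h ^ 2 := by nlinarith [sq_nonneg (K * β - h)]
    _ < h * (L_r / 2 + h) := by nlinarith [mul_lt_mul_of_pos_left hh_r hh]
    _ ≤ h * (l_r + h) := by gcongr; linarith [(abs_le.1 hl_r).1]

end KeyInequalities

theorem eventually_penalty_bounds {L₁ L_r h β : ℕ → ℝ} (hL : ∀ n, L_r n ≤ L₁ n)
    (hL_r : ∀ n, 0 < L_r n) (hh : ∀ n, 0 ≤ h n) (hβ : ∀ n, 0 < β n)
    (hh₁ : Tendsto (fun n => (h n + β n) * L₁ n / L_r n ^ 2) atTop (𝓝 0))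
    (hh₃ : Tendsto (fun n => h n * L_r n / β n ^ 2) atTop atTop) {K : ℝ} (hK : 0 ≤ K) :
    ∀ᶠ n in atTop, 8 * (K + 1) * (h n + β n) * L₁ n < L_r n ^ 2 ∧
      8 * K ^ 2 * β n ^ 2 ≤ h n * L_r n ∧ 4 * h n < L_r n := by
  have hK₁ : 0 < 8 * (K + 1) := by linarith
  filter_upwards [hh₁.eventually_lt_const (one_div_pos.2 hK₁),
    hh₃.eventually_ge_atTop (8 * K ^ 2)] with n hn₁ hn₃
  rw [div_lt_div_iff₀ (pow_pos (hL_r n) 2) hK₁] at hn₁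
  rw [le_div_iff₀ (pow_pos (hβ n) 2)] at hn₃
  have hhL : h n * L_r n ≤ (h n + β n) * L₁ n :=
    mul_le_mul (by linarith [hβ n]) (hL n) (hL_r n).le (by linarith [hh n, hβ n])
  have hhL_r : 8 * h n * L_r n < L_r n ^ 2 := by
    nlinarith [mul_nonneg hK (mul_nonneg (hh n) (hL_r n).le)]
  refine ⟨by linarith, hn₃, ?_⟩
  nlinarith [hL_r n]

section Probability

variable {Ω : Type*} [MeasurableSpace Ω] (P : Measure Ω)

theorem eventually_measure_half_lt_abs_sub_lt {X : ℕ → Ω → ℝ} {L γ : ℕ → ℝ}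
    (hL : ∀ n, 0 < L n) (hγ : γ =o[atTop] L)
    (ha : ∀ ε : ℝ, 0 < ε → ∃ M : ℝ, 0 < M ∧
      limsup (fun n => P {ω | ε * L n + M * γ n < |X n ω - L n|}) atTop ≤ ENNReal.ofReal ε)
    {δ : ℝ} (hδ : 0 < δ) :
    ∀ᶠ n in atTop, P {ω | L n / 2 < |X n ω - L n|} < ENNReal.ofReal δ := by
  set ε := min (1 / 4) (δ / 2)
  have hε : 0 < ε := by positivity
  obtain ⟨M, hM, hlim⟩ := ha ε hε
  have hεδ : ENNReal.ofReal ε < ENNReal.ofReal δ :=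
    (ENNReal.ofReal_lt_ofReal_iff hδ).2 (by linarith [min_le_right (1 / 4 : ℝ) (δ / 2)])
  filter_upwards [eventually_lt_of_limsup_lt (hlim.trans_lt hεδ),
    hγ.def (show 0 < 1 / (4 * M) by positivity)] with n hPn hγn
  refine (measure_mono fun ω hω => ?_).trans_lt hPn
  rw [Real.norm_eq_abs, Real.norm_eq_abs, abs_of_pos (hL n)] at hγn
  have hMγ : M * γ n ≤ L n / 4 :=
    calc M * γ n ≤ M * (1 / (4 * M) * L n) := by gcongr; exact (le_abs_self _).trans hγn
      _ = L n / 4 := by field_simp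
  have hεL : ε * L n ≤ L n / 4 := by
    nlinarith [min_le_left (1 / 4 : ℝ) (δ / 2), hL n]
  simp only [Set.mem_ofPred_eq] at hω ⊢
  linarith

theorem one_sub_le_measure_of_forall_notMem [IsProbabilityMeasure P] {G B₁ B₂ B₃ : Set Ω}
    {δ : ℝ} (hδ : 0 ≤ δ) (h₁ : P B₁ ≤ ENNReal.ofReal (δ / 3))
    (h₂ : P B₂ ≤ ENNReal.ofReal (δ / 3)) (h₃ : P B₃ ≤ ENNReal.ofReal (δ / 3))
    (hG : ∀ ω, ω ∉ B₁ → ω ∉ B₂ → ω ∉ B₃ → ω ∈ G) : 1 - ENNReal.ofReal δ ≤ P G := by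
  have hcover : Set.univ ⊆ G ∪ (B₁ ∪ B₂ ∪ B₃) := fun ω _ => by
    by_contra hω
    simp only [Set.mem_union, not_or] at hω
    exact hω.1 (hG ω hω.2.1.1 hω.2.1.2 hω.2.2)
  have hδ3 : ENNReal.ofReal δ = ENNReal.ofReal (δ / 3) + ENNReal.ofReal (δ / 3) +
      ENNReal.ofReal (δ / 3) := by
    rw [← ENNReal.ofReal_add (by positivity) (by positivity),
      ← ENNReal.ofReal_add (by positivity) (by positivity)]
    ring_nf
  rw [tsub_le_iff_right]
  calc 1 = P Set.univ := measure_univ.symm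
    _ ≤ P G + (P B₁ + P B₂ + P B₃) :=
      (measure_mono hcover).trans <| (measure_union_le _ _).trans <| add_le_add_right
        ((measure_union_le _ _).trans (add_le_add_left (measure_union_le _ _) _)) _
    _ ≤ P G + ENNReal.ofReal δ := by rw [hδ3]; gcongr

theorem tendsto_measure_nhds_one [IsProbabilityMeasure P] {G : ℕ → Set Ω}
    (hG : ∀ δ : ℝ, 0 < δ → ∀ᶠ n in atTop, 1 - ENNReal.ofReal δ ≤ P (G n)) :
    Tendsto (fun n => P (G n)) atTop (𝓝 1) := by
  rw [ENNReal.tendsto_nhds ENNReal.one_ne_top]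
  intro ε hε
  rcases eq_or_ne ε ⊤ with rfl | hε_top
  · exact Eventually.of_forall fun n => ⟨by simp, by simp⟩
  filter_upwards [hG ε.toReal (ENNReal.toReal_pos hε.ne' hε_top)] with n hn
  rw [ENNReal.ofReal_toReal hε_top] at hn
  exact ⟨hn, prob_le_one.trans le_self_add⟩

end Probability

theorem stmt1
    (r mstar : ℕ) (hr : 1 ≤ r) (hrm : r ≤ mstar)
    (p : ℕ → ℕ) (hp : ∀ n, mstar < p n)
    {Ω : Type*} [MeasurableSpace Ω] (P : Measure Ω) [IsProbabilityMeasure P]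
    (What : (n : ℕ) → Ω → Matrix (Fin (p n)) (Fin (p n)) ℝ)
    (hWhatpsd : ∀ n ω, (What n ω).PosSemidef)
    -- λ̂ n ω : the eigenvalues of Ŵ⁽ⁿ⁾(ω), listed in decreasing order
    (lamhat : (n : ℕ) → Ω → Fin (p n) → ℝ)
    (hlamhat_anti : ∀ n ω, Antitone (lamhat n ω))
    (hlamhat_eig : ∀ n ω, ∃ σ : Equiv.Perm (Fin (p n)),
        lamhat n ω = (hWhatpsd n ω).isHermitian.eigenvalues ∘ σ)
    -- λ n : the eigenvalues of W⁽ⁿ⁾, listed in decreasing order; the top r are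
    -- positive and the remaining p_n − r are zero
    (lam : (n : ℕ) → Fin (p n) → ℝ)
    (hlam_anti : ∀ n, Antitone (lam n))
    (hlam_pos : ∀ n (j : Fin (p n)), (j : ℕ) < r → 0 < lam n j)
    (γ β : ℕ → ℝ) (hβ : ∀ n, 0 < β n)
    -- condition (a): |λ̂₁ − λ₁| = o_P(λ₁) + O_P(γ_n) and |λ̂_r − λ_r| = o_P(λ_r) + O_P(γ_n)
    (ha1 : ∀ ε : ℝ, 0 < ε → ∃ M : ℝ, 0 < M ∧
        limsup (fun n => P {ω |
            ε * lam n ⟨0, by have := hp n; omega⟩ + M * γ n <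
              |lamhat n ω ⟨0, by have := hp n; omega⟩ -
                lam n ⟨0, by have := hp n; omega⟩|}) atTop ≤ ENNReal.ofReal ε)
    (ha2 : ∀ ε : ℝ, 0 < ε → ∃ M : ℝ, 0 < M ∧
        limsup (fun n => P {ω |
            ε * lam n ⟨r - 1, by have := hp n; omega⟩ + M * γ n <
              |lamhat n ω ⟨r - 1, by have := hp n; omega⟩ -
                lam n ⟨r - 1, by have := hp n; omega⟩|}) atTop ≤ ENNReal.ofReal ε)
    -- condition (b): λ̂_{r+1} = O_P(β_n)
    (hb : ∀ ε : ℝ, 0 < ε → ∃ M : ℝ, 0 < M ∧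
        limsup (fun n => P {ω |
            M * β n < lamhat n ω ⟨r, by have := hp n; omega⟩}) atTop ≤ ENNReal.ofReal ε)
    -- the penalty sequence
    (h : ℕ → ℝ) (hhpos : ∀ n, 0 < h n)
    (hh1 : Tendsto (fun n => (h n + β n) * lam n ⟨0, by have := hp n; omega⟩ /
        (lam n ⟨r - 1, by have := hp n; omega⟩) ^ 2) atTop (nhds 0))
    (hh2 : Tendsto (fun n => γ n / lam n ⟨r - 1, by have := hp n; omega⟩) atTop (nhds 0))
    (hh3 : Tendsto (fun n => h n * lam n ⟨r - 1, by have := hp n; omega⟩ / (β n) ^ 2)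
      atTop atTop) :
    Tendsto (fun n => P {ω | ∀ m, 1 ≤ m → ∀ hm2 : m ≤ mstar, m ≠ r →
        (lamhat n ω ⟨r, by have := hp n; omega⟩ + h n) /
            (lamhat n ω ⟨r - 1, by have := hp n; omega⟩ + h n) <
          (lamhat n ω ⟨m, by have := hp n; omega⟩ + h n) /
            (lamhat n ω ⟨m - 1, by have := hp n; omega⟩ + h n)}) atTop (nhds 1) := by
  have hlamhat_nonneg : ∀ n ω i, 0 ≤ lamhat n ω i := fun n ω i => by
    obtain ⟨σ, hσ⟩ := hlamhat_eig n ω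
    exact hσ ▸ (hWhatpsd n ω).eigenvalues_nonneg _
  have hL_r : ∀ n, 0 < lam n ⟨r - 1, by have := hp n; omega⟩ :=
    fun n => hlam_pos n _ (by simp only; omega)
  have hL : ∀ n, lam n ⟨r - 1, by have := hp n; omega⟩ ≤ lam n ⟨0, by have := hp n; omega⟩ :=
    fun n => hlam_anti n (Fin.mk_le_mk.2 (Nat.zero_le _))
  have hγ_r : γ =o[atTop] fun n => lam n ⟨r - 1, by have := hp n; omega⟩ :=
    (isLittleO_iff_tendsto fun n hn => absurd hn (hL_r n).ne').2 hh2
  have hγ₁ : γ =o[atTop] fun n => lam n ⟨0, by have := hp n; omega⟩ :=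
    hγ_r.trans_isBigO <| isBigO_of_le _ fun n => by
      simp only [Real.norm_eq_abs, abs_of_pos (hL_r n), abs_of_pos ((hL_r n).trans_le (hL n))]
      exact hL n
  refine tendsto_measure_nhds_one P fun δ hδ => ?_
  obtain ⟨K, hK, hK_lim⟩ := hb (δ / 4) (by positivity)
  have hB₃ := eventually_lt_of_limsup_lt <| hK_lim.trans_lt <|
    (ENNReal.ofReal_lt_ofReal_iff (by positivity : 0 < δ / 3)).2 (by linarith)
  filter_upwards [eventually_measure_half_lt_abs_sub_lt P (fun n => (hL_r n).trans_le (hL n))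
      hγ₁ ha1 (by positivity : 0 < δ / 3),
    eventually_measure_half_lt_abs_sub_lt P hL_r hγ_r ha2 (by positivity : 0 < δ / 3), hB₃,
    eventually_penalty_bounds hL hL_r (fun n => (hhpos n).le) hβ hh1 hh3 hK.le]
    with n hB₁ hB₂ hB₃ ⟨hpen₁, hpen₂, hh_r⟩
  refine one_sub_le_measure_of_forall_notMem P hδ.le hB₁.le hB₂.le hB₃.le
    fun ω hω₁ hω₂ hω₃ => ?_
  simp only [Set.mem_ofPred_eq, not_lt] at hω₁ hω₂ hω₃
  exact eigenRatio_lt_of_key (hlamhat_anti n ω) (hlamhat_nonneg n ω) (hhpos n) hrm (hp n)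
    (mul_lt_sq_of_close (hL_r n) hK.le (hβ n).le (hhpos n) hω₁ hω₂ hω₃ hpen₁ hh_r (hL n))
    (sq_lt_mul_of_close (hhpos n) hω₂ hω₃ (hlamhat_nonneg n ω _) hpen₂ hh_r)
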